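/- arXiv:0807.2058 — 2 statements merged into one kernel-verified Lean document; each statement's English description precedes it below -/
import Mathlib

section
/- For every symmetric bilinear form h on an n-dimensional real inner product space (V,g) and every integer k with 0 ≤ k ≤ n, the k-th elementary symmetric function of the eigenvalues of h satisfies σ_k(h) = (1/(k!)²)·c^k h^k, where h^k is the k-th exterior (Kulkarni–Nomizu type) power of h and c^k is the k-fold contraction. -/
/-!
Double forms on an `n`-dimensional real inner product space `(V, g)`, represented
by their components with respect to a (fixed) orthonormal basis: a `(p,q)`-double
form is determined by its values on pairs of increasingly ordered tuples of
distinct basis vectors, i.e. by a function `Finset (Fin n) → Finset (Fin n) → ℝ`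
(supported on pairs of sets of cardinalities `p` and `q`).
-/

open Finset

noncomputable section

abbrev DF (n : ℕ) := Finset (Fin n) → Finset (Fin n) → ℝ

namespace DF

variable {n : ℕ}

/-- The sign of the shuffle placing the increasing enumeration of `A` before that of
`B` and reordering increasingly. -/
def shuffleSign (A B : Finset (Fin n)) : ℝ :=
  (-1 : ℝ) ^ ∑ a ∈ A, (B.filter fun b => b < a).card

/-- The exterior product of double forms (Kulkarni–Nomizu type product), in components. -/
def mul (ω θ : DF n) : DF n := fun S T =>
  ∑ A ∈ S.powerset, ∑ C ∈ T.powerset,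
    shuffleSign A (S \ A) * shuffleSign C (T \ C) * ω A C * θ (S \ A) (T \ C)

/-- The `(0,0)`-double form `1`. -/
def one (n : ℕ) : DF n := fun S T => if S = ∅ ∧ T = ∅ then 1 else 0

/-- Powers `ω^k` of a double form with respect to the exterior product. -/
def pow (ω : DF n) : ℕ → DF n
  | 0 => one n
  | k + 1 => mul (pow ω k) ω

/-- The contraction `c ω`, obtained by summing, over an orthonormal basis, the
insertion of the basis vector as first argument in both slots. -/
def contr (ω : DF n) : DF n := fun S T =>
  ∑ i : Fin n,
    if i ∈ S ∨ i ∈ T then 0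
    else shuffleSign {i} S * shuffleSign {i} T * ω (insert i S) (insert i T)

/-- The iterated contraction `c^r`. -/
def contrN (r : ℕ) (ω : DF n) : DF n := contr^[r] ω

/-- The metric `g` as a `(1,1)`-double form (components in an orthonormal basis). -/
def gm (n : ℕ) : DF n := fun S T => if S = T ∧ S.card = 1 then 1 else 0

/-- The inner product of double forms induced by `g`. -/
def dinner (ω θ : DF n) : ℝ :=
  ∑ S : Finset (Fin n), ∑ T : Finset (Fin n), ω S T * θ S T

/-- The scalar given by a `(0,0)`-double form. -/
def toScalar (ω : DF n) : ℝ := ω ∅ ∅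

open scoped Classical in
/-- `σ_k` of a `(1,1)`-double form: the `k`-th elementary symmetric function of the
eigenvalues of the corresponding self-adjoint endomorphism (whose matrix in the
orthonormal basis is the matrix of components). -/
def sigma (k : ℕ) (ω : DF n) : ℝ :=
  if h : (Matrix.of fun i j => ω {i} {j} : Matrix (Fin n) (Fin n) ℝ).IsHermitian then
    ∑ s ∈ Finset.powersetCard k (Finset.univ : Finset (Fin n)), ∏ i ∈ s, h.eigenvalues i
  else 0

/-- `ω` is a `(p,p)`-double form: its components are supported in bidegree `(p,p)`. -/
def IsDeg (p : ℕ) (ω : DF n) : Prop := ∀ S T, ω S T ≠ 0 → S.card = p ∧ T.card = p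

/-- Symmetry of a double form: `ω(a;b) = ω(b;a)`. -/
def IsSymm (ω : DF n) : Prop := ∀ S T, ω S T = ω T S

/-- The first Bianchi identity for a `(p,p)`-double form (in components): the complete
antisymmetrization over the first `p+1` vector arguments vanishes. -/
def FirstBianchi (p : ℕ) (ω : DF n) : Prop :=
  ∀ U T : Finset (Fin n), U.card = p + 1 → T.card = p - 1 →
    ∑ i ∈ U,
      (if i ∈ T then 0
       else shuffleSign {i} (U.erase i) * shuffleSign {i} T * ω (U.erase i) (insert i T)) = 0

end DF

section Geometry

variable {n : ℕ} {V : Type*} [NormedAddCommGroup V] [InnerProductSpace ℝ V]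

/-- The components, in the orthonormal basis `e`, of a `(p,p)`-double form given as a
function of `p + p` vector arguments. -/
def ofForm (e : OrthonormalBasis (Fin n) ℝ V) (p : ℕ)
    (ω : (Fin p → V) → (Fin p → V) → ℝ) : DF n := fun S T =>
  if h : S.card = p ∧ T.card = p then
    ω (fun i => e ((S.orderIsoOfFin h.1 i : Fin n)))
      (fun i => e ((T.orderIsoOfFin h.2 i : Fin n)))
  else 0

/-- The components of a bilinear form, viewed as a `(1,1)`-double form. -/
def ofBilin (e : OrthonormalBasis (Fin n) ℝ V) (b : V → V → ℝ) : DF n :=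
  ofForm e 1 fun x y => b (x 0) (y 0)

/-- The components of a `(2,2)`-double form given as a function of four vectors. -/
def ofCurv (e : OrthonormalBasis (Fin n) ℝ V) (R : V → V → V → V → ℝ) : DF n :=
  ofForm e 2 fun x y => R (x 0) (x 1) (y 0) (y 1)

/-- Bilinearity of a real-valued function of two vector arguments. -/
def IsBilin (b : V → V → ℝ) : Prop :=
  (∀ (c : ℝ) (x x' y : V), b (c • x + x') y = c * b x y + b x' y) ∧
  (∀ (c : ℝ) (x y y' : V), b x (c • y + y') = c * b x y + b x y')

/-- Symmetry of a bilinear form. -/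
def IsSymmBilin (b : V → V → ℝ) : Prop := ∀ x y, b x y = b y x

/-- An algebraic curvature tensor: a multilinear form of four vectors, antisymmetric
in the first two arguments, symmetric under exchange of the two pairs, and satisfying
the first Bianchi identity. -/
structure IsCurv (R : V → V → V → V → ℝ) : Prop where
  linear : ∀ (c : ℝ) (x x' y z w : V), R (c • x + x') y z w = c * R x y z w + R x' y z w
  antisymm : ∀ x y z w, R x y z w = - R y x z w
  pair_symm : ∀ x y z w, R x y z w = R z w x y
  bianchi : ∀ x y z w, R x y z w + R y z x w + R z x y w = 0

/-- Multilinearity of a real-valued function of `p` vector arguments. -/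
def IsMultilinear (p : ℕ) (f : (Fin p → V) → ℝ) : Prop :=
  ∀ (x : Fin p → V) (i : Fin p) (c : ℝ) (u v : V),
    f (Function.update x i (c • u + v)) =
      c * f (Function.update x i u) + f (Function.update x i v)

/-- A function of `p` vector arguments is alternating. -/
def IsAlt (p : ℕ) (f : (Fin p → V) → ℝ) : Prop :=
  ∀ (x : Fin p → V) (i j : Fin p), i ≠ j → x i = x j → f x = 0

/-- A `(p,p)`-double form, as a function of `p + p` vector arguments:
multilinear and alternating in each of the two blocks of arguments. -/
def IsDoubleForm (p : ℕ) (ω : (Fin p → V) → (Fin p → V) → ℝ) : Prop :=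
  (∀ y, IsMultilinear p fun x => ω x y) ∧ (∀ y, IsAlt p fun x => ω x y) ∧
  (∀ x, IsMultilinear p fun y => ω x y) ∧ (∀ x, IsAlt p fun y => ω x y)

/-- Symmetry of a `(p,p)`-double form: `ω(x;y) = ω(y;x)`. -/
def IsSymmForm (p : ℕ) (ω : (Fin p → V) → (Fin p → V) → ℝ) : Prop := ∀ x y, ω x y = ω y x

/-- The first Bianchi identity for a `(p,p)`-double form of vector arguments:
the complete antisymmetrization over the first `p+1` vector arguments vanishes. -/
def FirstBianchiForm (p : ℕ) (hp : 0 < p) (ω : (Fin p → V) → (Fin p → V) → ℝ) : Prop :=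
  ∀ (z : Fin (p + 1) → V) (y : Fin p → V),
    ∑ σ : Equiv.Perm (Fin (p + 1)),
      ((Equiv.Perm.sign σ : ℤ) : ℝ) *
        ω (fun i => z (σ (Fin.castSucc i))) (Function.update y ⟨0, hp⟩ (z (σ (Fin.last p)))) = 0

/-- The scalar curvature `Scal = c²R` of a `(2,2)`-double form (in components). -/
def scalDF {n : ℕ} (Rd : DF n) : ℝ := DF.toScalar (DF.contrN 2 Rd)

/-- The `2k`-th Gauss–Bonnet curvature `h_{2k} = c^{2k} R^k / (2k)!`. -/
def h2kDF {n : ℕ} (k : ℕ) (Rd : DF n) : ℝ :=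
  DF.toScalar (DF.contrN (2 * k) (DF.pow Rd k)) / ((2 * k).factorial : ℝ)

/-- The second Gauss–Bonnet curvature `h₄ = c⁴ R² / 4!`. -/
def h4DF {n : ℕ} (Rd : DF n) : ℝ :=
  DF.toScalar (DF.contrN 4 (DF.pow Rd 2)) / (Nat.factorial 4 : ℝ)

end Geometry

end

/-
For a `(1,1)`-double form `h`, the component of `h^k` on a pair `(S, T)` of `k`-sets is `k!`
times the minor `det [h(e_s, e_t)]_{s ∈ S, t ∈ T}`: expanding the last factor of
`h^{k+1} = h^k h` produces exactly the Laplace expansion along a row, summed over the `k+1` rows.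
On the other hand `c^k ω (∅, ∅)` is `k!` times the sum of the diagonal components `ω (S, S)`
with `|S| = k`. Hence `c^k h^k` is `(k!)²` times the sum of the principal `k × k` minors of `h`,
which is, up to sign, a coefficient of the characteristic polynomial, i.e. `σ_k` of the
eigenvalues.
-/
namespace Finset

section

variable {α M : Type*} [DecidableEq α] [AddCommMonoid M]

theorem sum_powerset_eq_sum_erase {S : Finset α} {f : Finset α → M}
    (hf : ∀ A ⊆ S, #(S \ A) ≠ 1 → f A = 0) :
    ∑ A ∈ S.powerset, f A = ∑ a ∈ S, f (S.erase a) := by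
  rw [← sum_image (f := f) (erase_injOn S)]
  refine (sum_subset (fun A hA => ?_) fun A hA hA' => hf A (mem_powerset.1 hA) ?_).symm
  · obtain ⟨a, -, rfl⟩ := mem_image.1 hA
    exact mem_powerset.2 (erase_subset a S)
  · intro h1
    obtain ⟨a, ha⟩ := card_eq_one.1 h1
    refine hA' (mem_image.2 ⟨a, (mem_sdiff.1 (ha ▸ mem_singleton_self a)).1, ?_⟩)
    rw [erase_eq, ← ha, sdiff_sdiff_eq_self (mem_powerset.1 hA)]

theorem sum_powersetCard_sum_sdiff_insert (r : ℕ) (B : Finset α) (f : Finset α → M) :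
    ∑ S ∈ powersetCard r B, ∑ i ∈ B \ S, f (insert i S) =
      (r + 1) • ∑ T ∈ powersetCard (r + 1) B, f T := by
  have hcount : ∀ T ∈ powersetCard (r + 1) B, (r + 1) • f T = ∑ _i ∈ T, f T := by
    intro T hT
    rw [sum_const, (mem_powersetCard.1 hT).2]
  rw [smul_sum, sum_congr rfl hcount, sum_sigma', sum_sigma']
  refine sum_nbij' (fun p => ⟨insert p.2 p.1, p.2⟩) (fun p => ⟨p.1.erase p.2, p.2⟩)
    ?_ ?_ ?_ ?_ ?_
  all_goals rintro ⟨S, i⟩ hp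
  all_goals simp only [mem_sigma, mem_powersetCard, mem_sdiff] at hp ⊢
  · exact ⟨⟨insert_subset hp.2.1 hp.1.1, by rw [card_insert_of_notMem hp.2.2, hp.1.2]⟩,
      mem_insert_self i S⟩
  · refine ⟨⟨(erase_subset i S).trans hp.1.1, by rw [card_erase_of_mem hp.2, hp.1.2]; rfl⟩,
      hp.1.1 hp.2, notMem_erase i S⟩
  · rw [erase_insert hp.2.2]
  · rw [insert_erase hp.2]

end

theorem sum_orderEmbOfFin {α M : Type*} [LinearOrder α] [AddCommMonoid M] (s : Finset α)
    {k : ℕ} (h : #s = k) (f : α → M) : ∑ i, f (s.orderEmbOfFin h i) = ∑ x ∈ s, f x := by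
  conv_rhs => rw [← map_orderEmbOfFin_univ s h]
  rw [sum_map]
  rfl

variable {α : Type*} [LinearOrder α] {S : Finset α} {k : ℕ}

theorem card_erase_orderEmbOfFin (hS : #S = k + 1) (i : Fin (k + 1)) :
    #(S.erase (S.orderEmbOfFin hS i)) = k := by
  rw [card_erase_of_mem (orderEmbOfFin_mem S hS i), hS, Nat.add_sub_cancel]

theorem orderEmbOfFin_erase (hS : #S = k + 1) (i : Fin (k + 1)) (m : Fin k) :
    (S.erase (S.orderEmbOfFin hS i)).orderEmbOfFin (card_erase_orderEmbOfFin hS i) m =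
      S.orderEmbOfFin hS (i.succAbove m) := by
  refine congrFun (orderEmbOfFin_unique _ (fun x => ?_)
    ((S.orderEmbOfFin hS).strictMono.comp (Fin.strictMono_succAbove i))).symm m
  exact mem_erase.2 ⟨(S.orderEmbOfFin hS).injective.ne (Fin.succAbove_ne i x),
    orderEmbOfFin_mem S hS _⟩

theorem card_filter_orderEmbOfFin_lt (hS : #S = k + 1) (i : Fin (k + 1)) :
    #{x ∈ S | S.orderEmbOfFin hS i < x} = k - i := by
  have hfilter : {x ∈ S | S.orderEmbOfFin hS i < x} =
      (Ioi i).map (S.orderEmbOfFin hS).toEmbedding := by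
    ext x
    simp only [mem_filter, mem_map, mem_Ioi, RelEmbedding.coe_toEmbedding]
    constructor
    · rintro ⟨hx, hlt⟩
      obtain ⟨j, rfl⟩ : x ∈ Set.range (S.orderEmbOfFin hS) := by rwa [range_orderEmbOfFin]
      exact ⟨j, (S.orderEmbOfFin hS).lt_iff_lt.1 hlt, rfl⟩
    · rintro ⟨j, hj, rfl⟩
      exact ⟨orderEmbOfFin_mem S hS j, (S.orderEmbOfFin hS).strictMono hj⟩
  rw [hfilter, card_map, Fin.card_Ioi, Nat.add_sub_cancel]

end Finset

namespace Matrix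

variable {ι R : Type*}

theorem det_submatrix_orderEmbOfFin [LinearOrder ι] [CommRing R] (M : Matrix ι ι R)
    {S : Finset ι} {k : ℕ} (h : #S = k) :
    (M.submatrix (S.orderEmbOfFin h) (S.orderEmbOfFin h)).det =
      (M.submatrix ((↑) : S → ι) (↑)).det := by
  rw [← det_submatrix_equiv_self (S.orderIsoOfFin h).toEquiv]
  rfl

theorem det_submatrix_diagonal_coe [DecidableEq ι] [CommRing R] (d : ι → R) (S : Finset ι) :
    ((diagonal d).submatrix ((↑) : S → ι) (↑)).det = ∏ i ∈ S, d i := by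
  rw [submatrix_diagonal _ _ Subtype.val_injective, det_diagonal]
  exact prod_coe_sort S d

theorem IsHermitian.sum_det_submatrix_eq_sum_prod_eigenvalues [Fintype ι] [DecidableEq ι]
    {𝕜 : Type*} [RCLike 𝕜]
    {A : Matrix ι ι 𝕜} (hA : A.IsHermitian) {k : ℕ} (hk : k ≤ Fintype.card ι) :
    ∑ S ∈ powersetCard k univ, (A.submatrix (Subtype.val : S → ι) Subtype.val).det =
      ∑ S ∈ powersetCard k univ, ∏ i ∈ S, (hA.eigenvalues i : 𝕜) := by
  have hcharpoly : A.charpoly = (diagonal fun i => (hA.eigenvalues i : 𝕜)).charpoly := by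
    rw [hA.charpoly_eq, charpoly_diagonal]
  have hminors := charpoly_coeff_eq_sum_minors A k hk
  rw [hcharpoly, charpoly_coeff_eq_sum_minors _ k hk] at hminors
  simp only [det_submatrix_diagonal_coe] at hminors
  exact (mul_left_cancel₀ (pow_ne_zero k (neg_ne_zero.2 one_ne_zero)) hminors).symm

end Matrix

namespace DF

variable {n : ℕ}

def toMatrix (ω : DF n) : Matrix (Fin n) (Fin n) ℝ := Matrix.of fun i j => ω {i} {j}

theorem sigma_of_isHermitian {ω : DF n} (hω : ω.toMatrix.IsHermitian) (k : ℕ) :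
    sigma k ω = ∑ S ∈ powersetCard k univ, ∏ i ∈ S, hω.eigenvalues i :=
  dif_pos hω

theorem shuffleSign_mul_self (A B : Finset (Fin n)) :
    shuffleSign A B * shuffleSign A B = 1 := by
  rw [shuffleSign, ← pow_add, ← two_mul, pow_mul]
  norm_num

theorem shuffleSign_erase_orderEmbOfFin {S : Finset (Fin n)} {k : ℕ} (hS : #S = k + 1)
    (i : Fin (k + 1)) :
    shuffleSign (S.erase (S.orderEmbOfFin hS i)) {S.orderEmbOfFin hS i} = (-1) ^ (k + i) := by
  set a := S.orderEmbOfFin hS i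
  have hcount :
      ∑ x ∈ S.erase a, (({a} : Finset (Fin n)).filter fun b => b < x).card = k - i := by
    simp only [filter_singleton, apply_ite card, card_singleton, card_empty]
    rw [← card_filter, filter_erase, erase_eq_of_notMem (by simp), card_filter_orderEmbOfFin_lt]
  rw [shuffleSign, hcount, show k + (i : ℕ) = k - i + 2 * i by omega, pow_add, pow_mul]
  norm_num

theorem contr_apply_self (ω : DF n) (A : Finset (Fin n)) :
    contr ω A A = ∑ i ∈ Aᶜ, ω (insert i A) (insert i A) := by
  simp only [contr, or_self, shuffleSign_mul_self, one_mul]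
  rw [sum_ite, sum_const_zero, zero_add, filter_not, filter_mem_eq_inter, univ_inter,
    compl_eq_univ_sdiff]

theorem contrN_apply_self (r : ℕ) (ω : DF n) (A : Finset (Fin n)) :
    contrN r ω A A = r.factorial * ∑ S ∈ powersetCard r Aᶜ, ω (A ∪ S) (A ∪ S) := by
  induction r generalizing ω with
  | zero => simp [contrN]
  | succ r ih =>
    have hstep : ∀ S ∈ powersetCard r Aᶜ, contr ω (A ∪ S) (A ∪ S) =
        ∑ i ∈ Aᶜ \ S, ω (A ∪ insert i S) (A ∪ insert i S) := by
      intro S _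
      rw [contr_apply_self, compl_union, ← sdiff_eq_inter_compl]
      simp only [union_insert]
    rw [contrN, Function.iterate_succ_apply, ← contrN, ih, sum_congr rfl hstep,
      sum_powersetCard_sum_sdiff_insert r Aᶜ fun T => ω (A ∪ T) (A ∪ T), nsmul_eq_mul,
      Nat.factorial_succ]
    push_cast
    ring

theorem mul_apply_of_isDeg_one {ω θ : DF n} (hθ : IsDeg 1 θ) (S T : Finset (Fin n)) :
    mul ω θ S T = ∑ a ∈ S, ∑ c ∈ T,
      shuffleSign (S.erase a) {a} * shuffleSign (T.erase c) {c} *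
        ω (S.erase a) (T.erase c) * θ {a} {c} := by
  have hθ' : ∀ A C, #A ≠ 1 ∨ #C ≠ 1 → θ A C = 0 := fun A C h => by
    by_contra h0
    exact h.elim (· (hθ A C h0).1) (· (hθ A C h0).2)
  rw [mul, sum_powerset_eq_sum_erase fun A _ hA => sum_eq_zero fun C _ => by
    rw [hθ' _ _ (Or.inl hA), mul_zero]]
  refine sum_congr rfl fun a ha => ?_
  rw [sum_powerset_eq_sum_erase fun C _ hC => by rw [hθ' _ _ (Or.inr hC), mul_zero]]
  refine sum_congr rfl fun c hc => ?_
  rw [sdiff_erase_self ha, sdiff_erase_self hc]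

theorem pow_apply_of_isDeg_one {ω : DF n} (hω : IsDeg 1 ω) {k : ℕ} {S T : Finset (Fin n)}
    (hS : #S = k) (hT : #T = k) :
    pow ω k S T =
      k.factorial * (ω.toMatrix.submatrix (S.orderEmbOfFin hS) (T.orderEmbOfFin hT)).det := by
  induction k generalizing S T with
  | zero =>
    obtain rfl := card_eq_zero.1 hS
    obtain rfl := card_eq_zero.1 hT
    simp [pow, one]
  | succ k ih =>
    set N := ω.toMatrix.submatrix (S.orderEmbOfFin hS) (T.orderEmbOfFin hT)
    have hterm : ∀ i j, shuffleSign (S.erase (S.orderEmbOfFin hS i)) {S.orderEmbOfFin hS i} *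
        shuffleSign (T.erase (T.orderEmbOfFin hT j)) {T.orderEmbOfFin hT j} *
        pow ω k (S.erase (S.orderEmbOfFin hS i)) (T.erase (T.orderEmbOfFin hT j)) *
        ω {S.orderEmbOfFin hS i} {T.orderEmbOfFin hT j} =
          k.factorial * ((-1 : ℝ) ^ (i + j : ℕ) * N i j *
            (N.submatrix i.succAbove j.succAbove).det) := by
      intro i j
      have hminor : ω.toMatrix.submatrix
          ((S.erase (S.orderEmbOfFin hS i)).orderEmbOfFin (card_erase_orderEmbOfFin hS i))
          ((T.erase (T.orderEmbOfFin hT j)).orderEmbOfFin (card_erase_orderEmbOfFin hT j)) =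
          N.submatrix i.succAbove j.succAbove := by
        ext a b
        simp only [Matrix.submatrix_apply, orderEmbOfFin_erase, N]
      have hsign : (-1 : ℝ) ^ (k + i : ℕ) * (-1) ^ (k + j : ℕ) = (-1) ^ (i + j : ℕ) := by
        rw [← pow_add, show k + i + (k + j) = (i + j : ℕ) + 2 * k by omega, pow_add, pow_mul]
        norm_num
      rw [shuffleSign_erase_orderEmbOfFin, shuffleSign_erase_orderEmbOfFin,
        ih (card_erase_orderEmbOfFin hS i) (card_erase_orderEmbOfFin hT j), hminor, ← hsign]
      simp only [N, toMatrix, Matrix.submatrix_apply, Matrix.of_apply]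
      ring
    rw [pow, mul_apply_of_isDeg_one hω, ← sum_orderEmbOfFin S hS]
    simp only [← sum_orderEmbOfFin T hT, hterm, ← mul_sum, ← Matrix.det_succ_row N]
    rw [sum_const, card_univ, Fintype.card_fin, nsmul_eq_mul, Nat.factorial_succ]
    push_cast
    ring

theorem toScalar_contrN_pow {ω : DF n} (hω : IsDeg 1 ω) (k : ℕ) :
    toScalar (contrN k (pow ω k)) = (k.factorial : ℝ) ^ 2 *
      ∑ S ∈ powersetCard k (univ : Finset (Fin n)),
        (ω.toMatrix.submatrix (Subtype.val : S → Fin n) Subtype.val).det := by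
  rw [toScalar, contrN_apply_self, compl_empty, sq, mul_assoc]
  congr 1
  rw [mul_sum]
  refine sum_congr rfl fun S hS => ?_
  rw [empty_union, pow_apply_of_isDeg_one hω (mem_powersetCard.1 hS).2 (mem_powersetCard.1 hS).2,
    Matrix.det_submatrix_orderEmbOfFin]

end DF

section Geometry

variable {n : ℕ} {V : Type*} [NormedAddCommGroup V] [InnerProductSpace ℝ V]

theorem isDeg_ofForm (e : OrthonormalBasis (Fin n) ℝ V) (p : ℕ)
    (ω : (Fin p → V) → (Fin p → V) → ℝ) : DF.IsDeg p (ofForm e p ω) := fun S T h => by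
  by_contra hc
  exact h (dif_neg hc)

theorem ofBilin_singleton (e : OrthonormalBasis (Fin n) ℝ V) (b : V → V → ℝ) (i j : Fin n) :
    ofBilin e b {i} {j} = b (e i) (e j) := by
  simp [ofBilin, ofForm, coe_orderIsoOfFin_apply, orderEmbOfFin_singleton]

theorem isHermitian_toMatrix_ofBilin (e : OrthonormalBasis (Fin n) ℝ V) {b : V → V → ℝ}
    (hb : IsSymmBilin b) : (ofBilin e b).toMatrix.IsHermitian :=
  Matrix.IsHermitian.ext fun i j => by simp [DF.toMatrix, ofBilin_singleton, hb (e i)]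

end Geometry

theorem stmt0_sigma_eq_contraction_of_power_general
    (n k : ℕ) (hk : k ≤ n)
    (V : Type*) [NormedAddCommGroup V] [InnerProductSpace ℝ V]
    (e : OrthonormalBasis (Fin n) ℝ V)
    (h : V → V → ℝ) (hsymm : IsSymmBilin h) :
    DF.sigma k (ofBilin e h) =
      (1 / ((k.factorial : ℝ)) ^ 2) *
        DF.toScalar (DF.contrN k (DF.pow (ofBilin e h) k)) := by
  have hdeg : DF.IsDeg 1 (ofBilin e h) := isDeg_ofForm e 1 _
  have hherm := isHermitian_toMatrix_ofBilin e hsymm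
  rw [DF.sigma_of_isHermitian hherm, DF.toScalar_contrN_pow hdeg,
    hherm.sum_det_submatrix_eq_sum_prod_eigenvalues (by rwa [Fintype.card_fin]),
    one_div, inv_mul_cancel_left₀ (by positivity)]
  rfl -- the cast `RCLike.ofReal : ℝ → ℝ` is the identity

/-- For every symmetric bilinear form `h` on an `n`-dimensional real
inner product space `(V,g)` and every `0 ≤ k ≤ n`, the `k`-th elementary symmetric
function of the eigenvalues of `h` satisfies `σ_k(h) = (1/(k!)²) · c^k h^k`. -/
theorem stmt0_sigma_eq_contraction_of_power
    (n k : ℕ) (hk : k ≤ n)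
    (V : Type*) [NormedAddCommGroup V] [InnerProductSpace ℝ V]
    (hV : Module.finrank ℝ V = n)
    (e : OrthonormalBasis (Fin n) ℝ V)
    (h : V → V → ℝ) (hbil : IsBilin h) (hsymm : IsSymmBilin h) :
    DF.sigma k (ofBilin e h) =
      (1 / ((k.factorial : ℝ)) ^ 2) *
        DF.toScalar (DF.contrN k (DF.pow (ofBilin e h) k)) :=
  stmt0_sigma_eq_contraction_of_power_general n k hk V e h hsymm
end

section
/- Algebraic conformal transformation rule for h₄: let R be an algebraic curvature tensor and H a symmetric bilinear form on an n-dimensional real inner product space (V,g) with n ≥ 4, and let T₂ = h₂·g − cR be the Einstein tensor of R. Then the second Gauss–Bonnet curvature of the algebraic curvature tensor R − gH satisfies h₄(R − gH) = h₄(R) − 2(n−3)·⟨T₂, H⟩ + 2(n−2)(n−3)·σ₂(H). -/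
/-!
Double forms on an `n`-dimensional real inner product space `(V, g)`, represented
by their components with respect to a (fixed) orthonormal basis: a `(p,q)`-double
form is determined by its values on pairs of increasingly ordered tuples of
distinct basis vectors, i.e. by a function `Finset (Fin n) → Finset (Fin n) → ℝ`
(supported on pairs of sets of cardinalities `p` and `q`).
-/

open Finset

/-!
In components, `c^k ω (∅, ∅) = k! · ∑_{|A| = k} ω(A, A)`, so `h₄(θ)` is the diagonal sum of
`θ²` in bidegree `(4, 4)`. The product of `(p, p)`-double forms is associative and
commutative, so `(R - gH)² = R² - 2 g (R H) + g² H²`. The diagonal sum of `g ρ` in bidegree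
`(k + 1, k + 1)` is `n - k` times that of `ρ` in bidegree `(k, k)`, and for a `(1, 1)`-form `θ`
the diagonal sum of `ω θ` in bidegree `(k + 1, k + 1)` is
`(∑_{|B| = k} ω(B, B)) · tr θ - ⟨(c^{k-1} ω)ᵀ, θ⟩ / (k - 1)!`.
For `ω = R` this is `⟨T₂, H⟩`, as the Ricci tensor is symmetric, and for `ω = H` it is
`(tr H)² - tr H² = 2 σ₂(H)`.
-/

namespace Finset

variable {α β : Type*} [AddCommMonoid β]

theorem sum_powerset_eq_sum_singleton {A : Finset α} (f : Finset α → β)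
    (hf : ∀ B ⊆ A, #B ≠ 1 → f B = 0) : ∑ B ∈ A.powerset, f B = ∑ x ∈ A, f {x} := by
  rw [← sum_subset (fun B hB => mem_powerset.2 (mem_powersetCard.1 hB).1) fun B hB hB1 =>
    hf B (mem_powerset.1 hB) fun h => hB1 (mem_powersetCard.2 ⟨mem_powerset.1 hB, h⟩),
    powersetCard_one, sum_map]
  rfl

variable [DecidableEq α]

theorem sum_powerset_sdiff (A : Finset α) (f : Finset α → β) :
    ∑ B ∈ A.powerset, f (A \ B) = ∑ B ∈ A.powerset, f B :=
  sum_nbij' (A \ ·) (A \ ·) (fun _ _ => by simp) (fun _ _ => by simp)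
    (fun _ hB => sdiff_sdiff_eq_self (mem_powerset.1 hB))
    (fun _ hB => sdiff_sdiff_eq_self (mem_powerset.1 hB)) fun _ _ => rfl

theorem sum_powerset_eq_sum_erase_s17 {A : Finset α} (f : Finset α → β)
    (hf : ∀ B ⊆ A, #(A \ B) ≠ 1 → f B = 0) :
    ∑ B ∈ A.powerset, f B = ∑ x ∈ A, f (A.erase x) := by
  rw [← sum_powerset_sdiff, sum_powerset_eq_sum_singleton]
  · simp only [sdiff_singleton_eq_erase]
  · intro B hB h
    exact hf _ sdiff_subset (by rwa [Finset.sdiff_sdiff_eq_self hB])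

theorem sum_powerset_sum_powerset (S : Finset α) (F : Finset α → Finset α → β) :
    ∑ A ∈ S.powerset, ∑ B ∈ A.powerset, F A B =
      ∑ B ∈ S.powerset, ∑ E ∈ (S \ B).powerset, F (B ∪ E) B := by
  rw [sum_sigma', sum_sigma']
  refine sum_nbij' (fun p => ⟨p.2, p.1 \ p.2⟩) (fun p => ⟨p.1 ∪ p.2, p.1⟩) ?_ ?_ ?_ ?_ ?_
  · rintro ⟨A, B⟩ h
    simp only [mem_sigma, mem_powerset] at h ⊢
    exact ⟨h.2.trans h.1, sdiff_subset_sdiff h.1 le_rfl⟩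
  · rintro ⟨B, E⟩ h
    simp only [mem_sigma, mem_powerset] at h ⊢
    exact ⟨union_subset h.1 (h.2.trans sdiff_subset), subset_union_left⟩
  · rintro ⟨A, B⟩ h
    simp only [mem_sigma, mem_powerset] at h
    simp [union_sdiff_of_subset h.2]
  · rintro ⟨B, E⟩ h
    simp only [mem_sigma, mem_powerset] at h
    simp [union_sdiff_cancel_left (disjoint_of_subset_right h.2 disjoint_sdiff)]
  · rintro ⟨A, B⟩ h
    simp only [mem_sigma, mem_powerset] at h
    simp [union_sdiff_of_subset h.2]

theorem sum_powersetCard_succ_insert {a : α} {s : Finset α} (ha : a ∉ s) (k : ℕ)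
    (f : Finset α → β) :
    ∑ t ∈ powersetCard (k + 1) (insert a s), f t =
      ∑ t ∈ powersetCard (k + 1) s, f t + ∑ t ∈ powersetCard k s, f (insert a t) := by
  have hinj : Set.InjOn (insert a) (powersetCard k s : Set (Finset α)) := fun t ht u hu h => by
    rw [← erase_insert fun h' => ha ((mem_powersetCard.1 ht).1 h'),
      ← erase_insert fun h' => ha ((mem_powersetCard.1 hu).1 h'), h]
  have hdisj : Disjoint (powersetCard (k + 1) s) ((powersetCard k s).image (insert a)) := by
    refine disjoint_left.2 fun t ht ht' => ?_
    obtain ⟨u, -, rfl⟩ := mem_image.1 ht'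
    exact ha ((mem_powersetCard.1 ht).1 (mem_insert_self a u))
  rw [powersetCard_succ_insert ha, sum_union hdisj, sum_image hinj]

theorem sum_powersetCard_succ_sum_mem (U : Finset α) (k : ℕ) (f : Finset α → α → β) :
    ∑ A ∈ powersetCard (k + 1) U, ∑ x ∈ A, f A x =
      ∑ B ∈ powersetCard k U, ∑ x ∈ U \ B, f (insert x B) x := by
  rw [sum_sigma', sum_sigma']
  refine sum_nbij' (fun p => ⟨p.1.erase p.2, p.2⟩) (fun p => ⟨insert p.2 p.1, p.2⟩)
    ?_ ?_ ?_ ?_ ?_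
  · rintro ⟨A, x⟩ h
    simp only [mem_sigma, mem_powersetCard, mem_sdiff] at h ⊢
    refine ⟨⟨(erase_subset x A).trans h.1.1, ?_⟩, h.1.1 h.2, notMem_erase x A⟩
    rw [card_erase_of_mem h.2, h.1.2, Nat.add_sub_cancel]
  · rintro ⟨B, x⟩ h
    simp only [mem_sigma, mem_powersetCard, mem_sdiff] at h ⊢
    exact ⟨⟨insert_subset h.2.1 h.1.1, by rw [card_insert_of_notMem h.2.2, h.1.2]⟩,
      mem_insert_self x B⟩
  · rintro ⟨A, x⟩ h
    simp only [mem_sigma] at h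
    simp [insert_erase h.2]
  · rintro ⟨B, x⟩ h
    simp only [mem_sigma, mem_sdiff] at h
    simp [erase_insert h.2.2]
  · rintro ⟨A, x⟩ h
    simp only [mem_sigma] at h
    simp [insert_erase h.2]

theorem sum_powersetCard_filter_superset [Fintype α] (D : Finset α) (m : ℕ)
    (f : Finset α → β) :
    ∑ A ∈ powersetCard (m + #D) univ with D ⊆ A, f A =
      ∑ C ∈ powersetCard m Dᶜ, f (C ∪ D) := by
  symm
  refine sum_nbij' (· ∪ D) (· \ D) ?_ ?_ ?_ ?_ fun _ _ => rfl
  · intro C hC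
    simp only [mem_powersetCard, subset_compl_iff_disjoint_right] at hC
    simp only [mem_filter, mem_powersetCard_univ]
    exact ⟨by rw [card_union_of_disjoint hC.1, hC.2], subset_union_right⟩
  · intro A hA
    simp only [mem_filter, mem_powersetCard_univ] at hA
    simp [card_sdiff_of_subset hA.2, hA.1]
  · intro C hC
    simp only [mem_powersetCard, subset_compl_iff_disjoint_right] at hC
    exact union_sdiff_cancel_right hC.1
  · intro A hA
    simp only [mem_filter] at hA
    exact sdiff_union_of_subset hA.2

theorem sum_sum_mem_sum_mem_comm [Fintype α] (s : Finset (Finset α))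
    (F : Finset α → α → α → β) :
    ∑ A ∈ s, ∑ x ∈ A, ∑ y ∈ A, F A x y = ∑ x, ∑ y, ∑ A ∈ s with {x, y} ⊆ A, F A x y := by
  rw [sum_comm' (s' := fun x => {A ∈ s | x ∈ A}) (t' := univ) (by simp)]
  refine sum_congr rfl fun x _ => sum_comm' fun A y => ?_
  simp only [mem_filter, insert_subset_iff, singleton_subset_iff, mem_univ]
  tauto

theorem two_mul_sum_powersetCard_two_prod {R : Type*} [CommRing R] (s : Finset α)
    (f : α → R) :
    2 * ∑ t ∈ s.powersetCard 2, ∏ i ∈ t, f i = (∑ i ∈ s, f i) ^ 2 - ∑ i ∈ s, f i ^ 2 := by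
  induction s using Finset.induction_on with
  | empty => rw [powersetCard_eq_empty.2 (by simp)]; simp
  | insert a s ha ih =>
    have hpair : ∀ i ∈ s, ∏ j ∈ insert a {i}, f j = f a * f i := fun i hi =>
      prod_pair (ne_of_mem_of_not_mem hi ha).symm
    rw [sum_powersetCard_succ_insert ha, powersetCard_one, sum_map, sum_insert ha, sum_insert ha]
    simp only [Function.Embedding.coeFn_mk]
    rw [sum_congr rfl hpair, ← mul_sum]
    linear_combination ih

end Finset

theorem Matrix.IsHermitian.trace_mul_self {𝕜 n : Type*} [RCLike 𝕜] [Fintype n] [DecidableEq n]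
    {A : Matrix n n 𝕜} (hA : A.IsHermitian) :
    (A * A).trace = ∑ i, (hA.eigenvalues i : 𝕜) ^ 2 := by
  conv_lhs => rw [hA.spectral_theorem, ← map_mul, Unitary.conjStarAlgAut_apply,
    Matrix.trace_mul_cycle, Unitary.coe_star_mul_self, Matrix.one_mul,
    Matrix.diagonal_mul_diagonal, Matrix.trace_diagonal]
  simp [sq]

namespace DF

variable {n : ℕ}

@[simp]
theorem shuffleSign_empty_left (B : Finset (Fin n)) : shuffleSign ∅ B = 1 := by
  simp [shuffleSign]

@[simp]
theorem shuffleSign_empty_right (A : Finset (Fin n)) : shuffleSign A ∅ = 1 := by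
  simp [shuffleSign]

theorem shuffleSign_union_left {A B : Finset (Fin n)} (h : Disjoint A B) (C : Finset (Fin n)) :
    shuffleSign (A ∪ B) C = shuffleSign A C * shuffleSign B C := by
  rw [shuffleSign, shuffleSign, shuffleSign, ← pow_add, sum_union h]

theorem shuffleSign_union_right (A : Finset (Fin n)) {B C : Finset (Fin n)} (h : Disjoint B C) :
    shuffleSign A (B ∪ C) = shuffleSign A B * shuffleSign A C := by
  rw [shuffleSign, shuffleSign, shuffleSign, ← pow_add, ← sum_add_distrib]
  congr 1
  refine sum_congr rfl fun a _ => ?_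
  rw [filter_union, card_union_of_disjoint (disjoint_filter_filter h)]

theorem shuffleSign_mul_swap {A B : Finset (Fin n)} (h : Disjoint A B) :
    shuffleSign A B * shuffleSign B A = (-1) ^ (#A * #B) := by
  rw [shuffleSign, shuffleSign, ← pow_add]
  congr 1
  simp_rw [card_filter]
  rw [sum_comm (s := B), ← sum_add_distrib, card_eq_sum_ones, sum_mul, one_mul]
  refine sum_congr rfl fun a ha => ?_
  rw [card_eq_sum_ones, ← sum_add_distrib]
  refine sum_congr rfl fun b hb => ?_
  rcases (ne_of_mem_of_not_mem ha (disjoint_right.1 h hb)).symm.lt_or_gt with hab | hab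
  · simp [hab, hab.not_gt]
  · simp [hab, hab.not_gt]

theorem shuffleSign_comm {A B : Finset (Fin n)} (h : Disjoint A B) :
    shuffleSign B A = (-1) ^ (#A * #B) * shuffleSign A B := by
  rw [← shuffleSign_mul_swap h]
  linear_combination (-shuffleSign B A) * shuffleSign_mul_self A B

theorem shuffleSign_singleton_mul_swap {x y : Fin n} (h : x ≠ y) :
    shuffleSign {x} {y} * shuffleSign {y} {x} = -1 := by
  rw [shuffleSign_mul_swap (disjoint_singleton.2 h)]
  norm_num

theorem shuffleSign_cocycle {X Y Z : Finset (Fin n)} (hXY : Disjoint X Y) (hYZ : Disjoint Y Z) :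
    shuffleSign X Y * shuffleSign (X ∪ Y) Z = shuffleSign X (Y ∪ Z) * shuffleSign Y Z := by
  rw [shuffleSign_union_left hXY, shuffleSign_union_right _ hYZ]
  ring

theorem shuffleSign_insert_left {i : Fin n} {C S : Finset (Fin n)} (hi : i ∉ C)
    (hCS : Disjoint C S) :
    shuffleSign (insert i C) S = shuffleSign {i} C * shuffleSign C S * shuffleSign {i} (C ∪ S) := by
  rw [insert_eq, shuffleSign_union_left (disjoint_singleton_left.2 hi),
    shuffleSign_union_right _ hCS]
  linear_combination (-(shuffleSign {i} S * shuffleSign C S)) * shuffleSign_mul_self {i} C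

protected theorem one_mul (ω : DF n) : mul (one n) ω = ω := by
  funext S T
  simp [mul, one, ite_and]

protected theorem pow_two (ω : DF n) : pow ω 2 = mul ω ω := by
  simp [pow, DF.one_mul]

protected theorem sub_mul (ω ω' θ : DF n) : mul (ω - ω') θ = mul ω θ - mul ω' θ := by
  funext S T
  simp only [mul, Pi.sub_apply, ← sum_sub_distrib]
  exact sum_congr rfl fun _ _ => sum_congr rfl fun _ _ => by ring

protected theorem mul_sub (ω θ θ' : DF n) : mul ω (θ - θ') = mul ω θ - mul ω θ' := by
  funext S T
  simp only [mul, Pi.sub_apply, ← sum_sub_distrib]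
  exact sum_congr rfl fun _ _ => sum_congr rfl fun _ _ => by ring

protected theorem mul_assoc (ω θ ρ : DF n) : mul (mul ω θ) ρ = mul ω (mul θ ρ) := by
  funext S T
  simp only [mul, sum_mul, mul_sum]
  rw [sum_congr rfl fun A _ => sum_comm, sum_powerset_sum_powerset S]
  refine sum_congr rfl fun B hB => ?_
  rw [sum_comm, sum_congr rfl fun C _ => sum_comm, sum_powerset_sum_powerset T]
  refine sum_congr rfl fun D hD => ?_
  rw [sum_comm]
  refine sum_congr rfl fun E hE => sum_congr rfl fun F hF => ?_
  rw [mem_powerset] at hB hE hD hF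
  have hBE : Disjoint B E := disjoint_of_subset_right hE disjoint_sdiff
  have hDF : Disjoint D F := disjoint_of_subset_right hF disjoint_sdiff
  have cS := shuffleSign_cocycle hBE (disjoint_sdiff : Disjoint E ((S \ B) \ E))
  have cT := shuffleSign_cocycle hDF (disjoint_sdiff : Disjoint F ((T \ D) \ F))
  rw [union_sdiff_of_subset hE] at cS
  rw [union_sdiff_of_subset hF] at cT
  rw [union_sdiff_cancel_left hBE, union_sdiff_cancel_left hDF, ← sup_eq_union,
    ← sdiff_sdiff_left, ← sup_eq_union, ← sdiff_sdiff_left]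
  linear_combination (shuffleSign D F * shuffleSign (D ∪ F) ((T \ D) \ F) * ω B D * θ E F *
      ρ ((S \ B) \ E) ((T \ D) \ F)) * cS +
    (shuffleSign B (S \ B) * shuffleSign E ((S \ B) \ E) * ω B D * θ E F *
      ρ ((S \ B) \ E) ((T \ D) \ F)) * cT

theorem IsDeg.apply_eq_zero {p : ℕ} {ω : DF n} (hω : IsDeg p ω) {S T : Finset (Fin n)}
    (h : #S ≠ p ∨ #T ≠ p) : ω S T = 0 := by
  by_contra hz
  have := hω S T hz
  tauto

theorem isDeg_gm : IsDeg 1 (gm n) := by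
  intro S T h
  simp only [gm, ne_eq, ite_eq_right_iff, not_forall] at h
  exact ⟨h.1.2, h.1.1 ▸ h.1.2⟩

theorem IsDeg.mul {p q : ℕ} {ω θ : DF n} (hω : IsDeg p ω) (hθ : IsDeg q θ) :
    IsDeg (p + q) (mul ω θ) := by
  intro S T h
  obtain ⟨A, hA, h⟩ := exists_ne_zero_of_sum_ne_zero h
  obtain ⟨C, hC, h⟩ := exists_ne_zero_of_sum_ne_zero h
  obtain ⟨hA₁, hC₁⟩ := hω A C (right_ne_zero_of_mul (left_ne_zero_of_mul h))
  obtain ⟨hA₂, hC₂⟩ := hθ _ _ (right_ne_zero_of_mul h)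
  have := card_sdiff_add_card_eq_card (mem_powerset.1 hA)
  have := card_sdiff_add_card_eq_card (mem_powerset.1 hC)
  omega

theorem mul_comm_of_isDeg {p q : ℕ} {ω θ : DF n} (hω : IsDeg p ω) (hθ : IsDeg q θ) :
    mul ω θ = mul θ ω := by
  funext S T
  rw [mul, mul, ← sum_powerset_sdiff S]
  refine sum_congr rfl fun A hA => ?_
  rw [← sum_powerset_sdiff T]
  refine sum_congr rfl fun C hC => ?_
  rw [Finset.sdiff_sdiff_eq_self (mem_powerset.1 hA),
    Finset.sdiff_sdiff_eq_self (mem_powerset.1 hC)]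
  by_cases hz : θ A C * ω (S \ A) (T \ C) = 0
  · rcases mul_eq_zero.1 hz with hz | hz <;> simp [hz]
  obtain ⟨hA₁, hC₁⟩ := hθ _ _ (left_ne_zero_of_mul hz)
  obtain ⟨hA₂, hC₂⟩ := hω _ _ (right_ne_zero_of_mul hz)
  rw [shuffleSign_comm (disjoint_sdiff : Disjoint A (S \ A)),
    shuffleSign_comm (disjoint_sdiff : Disjoint C (T \ C)), hA₁, hC₁, hA₂, hC₂]
  linear_combination
    (shuffleSign A (S \ A) * shuffleSign C (T \ C) * ω (S \ A) (T \ C) * θ A C) *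
      (Even.neg_one_pow ⟨q * p, rfl⟩ : ((-1 : ℝ)) ^ (q * p + q * p) = 1)

theorem gm_singleton (x y : Fin n) : gm n {x} {y} = if x = y then 1 else 0 := by
  simp [gm]

theorem IsSymm.contr {ω : DF n} (hω : IsSymm ω) : IsSymm (contr ω) := fun S T => by
  simp only [DF.contr, hω (insert _ S), or_comm, mul_comm (shuffleSign _ S)]

theorem shuffleSign_mul_contr_union {C S T : Finset (Fin n)} (hC : C ⊆ (S ∪ T)ᶜ) (ω : DF n) :
    shuffleSign C S * shuffleSign C T * contr ω (C ∪ S) (C ∪ T) =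
      ∑ i ∈ (S ∪ T)ᶜ \ C, shuffleSign (insert i C) S * shuffleSign (insert i C) T *
        ω (insert i C ∪ S) (insert i C ∪ T) := by
  rw [subset_compl_iff_disjoint_right, disjoint_union_right] at hC
  rw [contr, mul_sum, ← sum_filter_add_sum_filter_not univ (· ∈ (S ∪ T)ᶜ \ C),
    filter_mem_eq_inter, univ_inter, sum_eq_zero (s := filter _ _), add_zero]
  · refine sum_congr rfl fun i hi => ?_
    simp only [mem_sdiff, mem_compl, mem_union, not_or] at hi
    rw [if_neg (by simp [hi.1.1, hi.1.2, hi.2]), shuffleSign_insert_left hi.2 hC.1,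
      shuffleSign_insert_left hi.2 hC.2, insert_union, insert_union]
    linear_combination (-(shuffleSign C S * shuffleSign C T * shuffleSign {i} (C ∪ S) *
      shuffleSign {i} (C ∪ T) * ω (insert i (C ∪ S)) (insert i (C ∪ T)))) *
        shuffleSign_mul_self {i} C
  · intro i hi
    simp only [mem_filter, mem_univ, true_and, mem_sdiff, mem_compl, mem_union, not_or] at hi
    rw [if_pos (by simp only [mem_union]; tauto), mul_zero]

theorem contrN_apply (m : ℕ) (ω : DF n) (S T : Finset (Fin n)) :
    contrN m ω S T = m.factorial * ∑ C ∈ powersetCard m (S ∪ T)ᶜ,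
      shuffleSign C S * shuffleSign C T * ω (C ∪ S) (C ∪ T) := by
  induction m generalizing ω with
  | zero => simp [contrN]
  | succ m ih =>
    set g : Finset (Fin n) → ℝ := fun D => shuffleSign D S * shuffleSign D T * ω (D ∪ S) (D ∪ T)
    have hsum := sum_powersetCard_succ_sum_mem (S ∪ T)ᶜ m fun D (_ : Fin n) => g D
    have hcard : ∀ D ∈ powersetCard (m + 1) (S ∪ T)ᶜ, ∑ _x ∈ D, g D = (m + 1 : ℕ) * g D :=
      fun D hD => by rw [sum_const, (mem_powersetCard.1 hD).2, nsmul_eq_mul]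
    rw [contrN, Function.iterate_succ_apply, ← contrN, ih,
      sum_congr rfl fun C hC => shuffleSign_mul_contr_union (mem_powersetCard.1 hC).1 ω,
      ← hsum, sum_congr rfl hcard, ← mul_sum, Nat.factorial_succ, Nat.cast_mul]
    ring

def diagSum (k : ℕ) (ω : DF n) : ℝ := ∑ A ∈ powersetCard k univ, ω A A

theorem diagSum_sub (k : ℕ) (ω θ : DF n) : diagSum k (ω - θ) = diagSum k ω - diagSum k θ := by
  simp [diagSum, sum_sub_distrib]

theorem diagSum_one (θ : DF n) : diagSum 1 θ = ∑ x, θ {x} {x} := by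
  rw [diagSum, powersetCard_one, sum_map]
  rfl

theorem toScalar_contrN (k : ℕ) (ω : DF n) :
    toScalar (contrN k ω) = k.factorial * diagSum k ω := by
  simp [toScalar, contrN_apply, diagSum]

theorem h4DF_eq_diagSum (ω : DF n) : h4DF ω = diagSum 4 (mul ω ω) := by
  rw [h4DF, DF.pow_two, toScalar_contrN]
  field_simp

theorem scalDF_eq_diagSum (ω : DF n) : scalDF ω = 2 * diagSum 2 ω := by
  rw [scalDF, toScalar_contrN]
  norm_num [Nat.factorial]

theorem diagSum_succ_eq_add_contrN (m : ℕ) (ω : DF n) (x : Fin n) :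
    diagSum (m + 1) ω =
      ∑ C ∈ powersetCard (m + 1) {x}ᶜ, ω C C + contrN m ω {x} {x} / m.factorial := by
  rw [diagSum, ← insert_compl_self x,
    sum_powersetCard_succ_insert (notMem_compl.2 (mem_singleton_self x)), contrN_apply,
    union_self, mul_div_cancel_left₀ _ (by positivity)]
  congr 1
  refine sum_congr rfl fun C _ => ?_
  rw [shuffleSign_mul_self, one_mul, union_comm, ← insert_eq]

theorem mul_gm_apply_self (ρ : DF n) (A : Finset (Fin n)) :
    mul (gm n) ρ A A = ∑ x ∈ A, ρ (A.erase x) (A.erase x) := by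
  have hdiag : ∀ B ∈ A.powerset, ∑ C ∈ A.powerset,
      shuffleSign B (A \ B) * shuffleSign C (A \ C) * gm n B C * ρ (A \ B) (A \ C) =
        if #B = 1 then ρ (A \ B) (A \ B) else 0 := fun B hB => by
    rw [sum_eq_single_of_mem B hB fun C _ hCB => by simp [gm, Ne.symm hCB]]
    by_cases hB1 : #B = 1 <;> simp [gm, hB1, shuffleSign_mul_self]
  rw [mul, sum_congr rfl hdiag, sum_powerset_eq_sum_singleton _ fun B _ h => if_neg h]
  simp [sdiff_singleton_eq_erase]

theorem diagSum_gm_mul (k : ℕ) (ρ : DF n) :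
    diagSum (k + 1) (mul (gm n) ρ) = (n - k : ℕ) * diagSum k ρ := by
  simp only [diagSum, mul_gm_apply_self]
  rw [sum_powersetCard_succ_sum_mem, mul_sum]
  refine sum_congr rfl fun B hB => ?_
  rw [sum_congr rfl fun x hx => by rw [erase_insert (mem_sdiff.1 hx).2], sum_const,
    ← compl_eq_univ_sdiff, card_compl, Fintype.card_fin, (mem_powersetCard.1 hB).2,
    nsmul_eq_mul]

theorem mul_apply_self_of_isDeg_one {θ : DF n} (hθ : IsDeg 1 θ) (ω : DF n)
    (A : Finset (Fin n)) :
    mul ω θ A A = ∑ x ∈ A, ∑ y ∈ A, shuffleSign (A.erase x) {x} * shuffleSign (A.erase y) {y} *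
      ω (A.erase x) (A.erase y) * θ {x} {y} := by
  rw [mul, sum_powerset_eq_sum_erase_s17]
  · refine sum_congr rfl fun x hx => ?_
    rw [sum_powerset_eq_sum_erase_s17]
    · refine sum_congr rfl fun y hy => ?_
      rw [sdiff_erase_self hx, sdiff_erase_self hy]
    · intro C _ hC
      rw [hθ.apply_eq_zero (Or.inr hC), mul_zero]
  · intro B _ hB
    exact sum_eq_zero fun C _ => by rw [hθ.apply_eq_zero (Or.inl hB), mul_zero]

theorem sum_pair_subset_mul_apply_self (m : ℕ) (ω θ : DF n) (x y : Fin n) :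
    ∑ A ∈ powersetCard (m + 2) univ with {x, y} ⊆ A,
      shuffleSign (A.erase x) {x} * shuffleSign (A.erase y) {y} *
        ω (A.erase x) (A.erase y) * θ {x} {y} =
      (if x = y then θ {x} {x} * diagSum (m + 1) ω else 0) -
        θ {x} {y} * contrN m ω {y} {x} / m.factorial := by
  obtain rfl | hxy := eq_or_ne x y
  · have hC : ∀ C ∈ powersetCard (m + 1) {x}ᶜ, (C ∪ {x}).erase x = C := fun C hC => by
      rw [union_comm, ← insert_eq, erase_insert]
      exact fun h => mem_compl.1 ((mem_powersetCard.1 hC).1 h) (mem_singleton_self x)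
    rw [pair_eq_singleton, if_pos rfl, show m + 2 = m + 1 + #{x} by simp,
      sum_powersetCard_filter_superset,
      sum_congr rfl fun C h => by rw [hC C h, shuffleSign_mul_self],
      diagSum_succ_eq_add_contrN m ω x]
    simp only [one_mul, ← sum_mul]
    ring
  · have hterm : ∀ C ∈ powersetCard m ({x, y} : Finset (Fin n))ᶜ,
        shuffleSign ((C ∪ {x, y}).erase x) {x} * shuffleSign ((C ∪ {x, y}).erase y) {y} *
          ω ((C ∪ {x, y}).erase x) ((C ∪ {x, y}).erase y) * θ {x} {y} =
        -(θ {x} {y} * (shuffleSign C {y} * shuffleSign C {x} * ω (C ∪ {y}) (C ∪ {x}))) := by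
      intro C hC
      have hxC : x ∉ C := fun h => mem_compl.1 ((mem_powersetCard.1 hC).1 h) (by simp)
      have hyC : y ∉ C := fun h => mem_compl.1 ((mem_powersetCard.1 hC).1 h) (by simp)
      have hx : (C ∪ {x, y}).erase x = C ∪ {y} := by
        ext z; simp only [mem_erase, mem_union, mem_insert, mem_singleton]; grind
      have hy : (C ∪ {x, y}).erase y = C ∪ {x} := by
        ext z; simp only [mem_erase, mem_union, mem_insert, mem_singleton]; grind
      rw [hx, hy, shuffleSign_union_left (disjoint_singleton_right.2 hyC),
        shuffleSign_union_left (disjoint_singleton_right.2 hxC)]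
      linear_combination (shuffleSign C {x} * shuffleSign C {y} * ω (C ∪ {y}) (C ∪ {x}) *
        θ {x} {y}) * shuffleSign_singleton_mul_swap hxy.symm
    have hpair : ({y} ∪ {x} : Finset (Fin n)) = {x, y} := by rw [union_comm, ← insert_eq]
    rw [if_neg hxy, show m + 2 = m + #{x, y} by simp [card_pair hxy],
      sum_powersetCard_filter_superset, sum_congr rfl hterm, contrN_apply, hpair,
      sum_neg_distrib, ← mul_sum]
    field_simp
    ring

theorem diagSum_mul_of_isDeg_one (m : ℕ) (ω : DF n) {θ : DF n} (hθ : IsDeg 1 θ) :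
    diagSum (m + 2) (mul ω θ) = diagSum (m + 1) ω * ∑ x, θ {x} {x} -
      (∑ x, ∑ y, θ {x} {y} * contrN m ω {y} {x}) / m.factorial := by
  rw [diagSum, sum_congr rfl fun A _ => mul_apply_self_of_isDeg_one hθ ω A,
    sum_sum_mem_sum_mem_comm]
  simp only [sum_pair_subset_mul_apply_self, sum_sub_distrib, sum_ite_eq, mem_univ, if_true,
    sum_div]
  rw [mul_comm (diagSum _ ω), sum_mul]

theorem dinner_of_isDeg_one (ω : DF n) {θ : DF n} (hθ : IsDeg 1 θ) :
    dinner ω θ = ∑ x, ∑ y, ω {x} {y} * θ {x} {y} := by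
  have hsum : ∀ f : Finset (Fin n) → ℝ, (∀ S, #S ≠ 1 → f S = 0) → ∑ S, f S = ∑ x, f {x} :=
    fun f hf => by rw [← powerset_univ, sum_powerset_eq_sum_singleton f fun B _ => hf B]
  rw [dinner, hsum _ fun S hS => sum_eq_zero fun T _ => by
    rw [hθ.apply_eq_zero (Or.inl hS), mul_zero]]
  exact sum_congr rfl fun x _ => hsum _ fun T hT => by
    rw [hθ.apply_eq_zero (Or.inr hT), mul_zero]

theorem two_mul_sigma_two {θ : DF n} (hθ : IsSymm θ) :
    2 * sigma 2 θ = (∑ x, θ {x} {x}) ^ 2 - ∑ x, ∑ y, θ {x} {y} * θ {y} {x} := by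
  have hM : (Matrix.of fun i j => θ {i} {j} : Matrix (Fin n) (Fin n) ℝ).IsHermitian :=
    Matrix.IsHermitian.ext fun i j => by simp [hθ {i}]
  have htrace := hM.trace_eq_sum_eigenvalues
  have htrace_sq := hM.trace_mul_self
  simp only [Matrix.trace, Matrix.diag_apply, Matrix.mul_apply, Matrix.of_apply,
    RCLike.ofReal_real_eq_id, id] at htrace htrace_sq
  rw [sigma, dif_pos hM, two_mul_sum_powersetCard_two_prod, htrace, htrace_sq]

theorem h4DF_sub_gm_mul (hn : 3 ≤ n) {ρ η : DF n} (hρ : IsDeg 2 ρ) (hρs : IsSymm ρ)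
    (hη : IsDeg 1 η) (hηs : IsSymm η) :
    h4DF (ρ - mul (gm n) η) =
      h4DF ρ - 2 * ((n : ℝ) - 3) * dinner ((scalDF ρ / 2) • gm n - contrN 1 ρ) η +
        2 * ((n : ℝ) - 2) * ((n : ℝ) - 3) * sigma 2 η := by
  have hcast (k : ℕ) (hk : k ≤ n) : ((n - k : ℕ) : ℝ) = n - k := by rw [Nat.cast_sub hk]
  have hcross : diagSum 4 (mul ρ (mul (gm n) η)) =
      ((n : ℝ) - 3) * dinner ((scalDF ρ / 2) • gm n - contrN 1 ρ) η := by
    have hric : ∀ x y, contrN 1 ρ {y} {x} = contrN 1 ρ {x} {y} := fun x y => hρs.contr {y} {x}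
    rw [← DF.mul_assoc, mul_comm_of_isDeg hρ isDeg_gm, DF.mul_assoc, diagSum_gm_mul 3,
      diagSum_mul_of_isDeg_one 1 _ hη, dinner_of_isDeg_one _ hη, scalDF_eq_diagSum, hcast 3 hn]
    simp only [hric, Pi.sub_apply, Pi.smul_apply, smul_eq_mul, gm_singleton, sub_mul,
      sum_sub_distrib, mul_ite, ite_mul, mul_one, mul_zero, zero_mul, sum_ite_eq, mem_univ,
      if_true, Nat.factorial_one, Nat.cast_one, div_one, ← mul_sum, mul_comm (η _ _)]
    ring
  have hsquare : diagSum 4 (mul (mul (gm n) η) (mul (gm n) η)) =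
      2 * ((n : ℝ) - 2) * ((n : ℝ) - 3) * sigma 2 η := by
    rw [DF.mul_assoc, ← DF.mul_assoc η, mul_comm_of_isDeg hη isDeg_gm, DF.mul_assoc,
      diagSum_gm_mul 3, diagSum_gm_mul 2, diagSum_mul_of_isDeg_one 0 _ hη, diagSum_one,
      hcast 3 hn, hcast 2 (by omega), mul_assoc 2, mul_comm 2, mul_assoc, two_mul_sigma_two hηs]
    simp only [contrN, Function.iterate_zero, id, Nat.factorial_zero, Nat.cast_one, div_one]
    ring
  rw [h4DF_eq_diagSum, h4DF_eq_diagSum, DF.sub_mul, DF.mul_sub, DF.mul_sub,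
    mul_comm_of_isDeg (isDeg_gm.mul hη) hρ, diagSum_sub, diagSum_sub, diagSum_sub, hcross,
    hsquare]
  ring

end DF

section Components

variable {n : ℕ} {V : Type*} [NormedAddCommGroup V] [InnerProductSpace ℝ V]

theorem isSymm_ofForm (e : OrthonormalBasis (Fin n) ℝ V) {p : ℕ}
    {ω : (Fin p → V) → (Fin p → V) → ℝ} (hω : IsSymmForm p ω) : DF.IsSymm (ofForm e p ω) :=
  fun S T => by
    by_cases h : #S = p ∧ #T = p
    · rw [ofForm, ofForm, dif_pos h, dif_pos h.symm, hω]
    · rw [ofForm, ofForm, dif_neg h, dif_neg fun h' => h h'.symm]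

end Components

theorem stmt17_conformal_transformation_of_h4_general
    (n : ℕ) (hn : 4 ≤ n)
    (V : Type*) [NormedAddCommGroup V] [InnerProductSpace ℝ V]
    (e : OrthonormalBasis (Fin n) ℝ V)
    (R : V → V → V → V → ℝ) (hR : IsCurv R)
    (H : V → V → ℝ) (hsymm : IsSymmBilin H) :
    h4DF (ofCurv e R - DF.mul (DF.gm n) (ofBilin e H)) =
      h4DF (ofCurv e R)
      - 2 * ((n : ℝ) - 3) *
          DF.dinner ((scalDF (ofCurv e R) / 2) • DF.gm n - DF.contrN 1 (ofCurv e R))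
            (ofBilin e H)
      + 2 * ((n : ℝ) - 2) * ((n : ℝ) - 3) * DF.sigma 2 (ofBilin e H) :=
  DF.h4DF_sub_gm_mul (by omega) (isDeg_ofForm e 2 _)
    (isSymm_ofForm e fun x y => hR.pair_symm (x 0) (x 1) (y 0) (y 1)) (isDeg_ofForm e 1 _)
    (isSymm_ofForm e fun x y => hsymm (x 0) (y 0))

/-- **algebraic conformal transformation rule for h₄.** For an algebraic
curvature tensor `R` and a symmetric bilinear form `H` on an `n`-dimensional real inner
product space (`n ≥ 4`), with Einstein tensor `T₂ = h₂·g − cR`,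
`h₄(R − gH) = h₄(R) − 2(n−3)·⟨T₂, H⟩ + 2(n−2)(n−3)·σ₂(H)`. -/
theorem stmt17_conformal_transformation_of_h4
    (n : ℕ) (hn : 4 ≤ n)
    (V : Type*) [NormedAddCommGroup V] [InnerProductSpace ℝ V]
    (hV : Module.finrank ℝ V = n)
    (e : OrthonormalBasis (Fin n) ℝ V)
    (R : V → V → V → V → ℝ) (hR : IsCurv R)
    (H : V → V → ℝ) (hbil : IsBilin H) (hsymm : IsSymmBilin H) :
    h4DF (ofCurv e R - DF.mul (DF.gm n) (ofBilin e H)) =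
      h4DF (ofCurv e R)
      - 2 * ((n : ℝ) - 3) *
          DF.dinner ((scalDF (ofCurv e R) / 2) • DF.gm n - DF.contrN 1 (ofCurv e R))
            (ofBilin e H)
      + 2 * ((n : ℝ) - 2) * ((n : ℝ) - 3) * DF.sigma 2 (ofBilin e H) :=
  stmt17_conformal_transformation_of_h4_general n hn V e R hR H hsymm
end
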